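/- arXiv:1606.08897 — 2 statements merged into one kernel-verified Lean document; each statement's English description precedes it below -/
import Mathlib

section
/- Let F be a self-adjoint operator with F² = 1 on a Hilbert module, and P a projection commuting with a grading operator. Then the following identities hold: (a) F[F,P] = −[F,P]F; (b) P[F,P] = [F,P](1−P); (c) P[F,P]² = PFPFP − P; and consequently, with S_± = ½(P ± S'), F'_{±∓} = S_± PFP S_∓, for every m ≥ 0: (S_+ − F'_{+−}F'_{−+})^{m+1} = (−1)^{m+1} S_+ [F,P]^{2m+2} S_+. -/
/-!
Identities (a)–(c) are ring identities using only `F² = 1` and `P² = P`; by (c) and its mirror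
image, `Q = [F,P]²` commutes with `P` and `QP = PQ = F'² − P`. Since `S'` anticommutes with `F'`,
it commutes with `F'²`, hence with `Q`, so `Q` commutes with the idempotent `S₊`. The grading
intertwines the corners, `S₊F' = F'S₋` and `S₋F' = F'S₊`, which collapses `F'₊₋F'₋₊` to `F'²S₊`;
thus `S₊ − F'₊₋F'₋₊ = −QS₊`, whose powers are `(−1)ⁿ S₊QⁿS₊`.
-/

section CommutatorIdentities

variable {A : Type*} [Ring A]

theorem mul_commutator_of_mul_self_eq_one {F : A} (hF : F * F = 1) (P : A) :
    F * (F * P - P * F) = -((F * P - P * F) * F) := by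
  have hF' (y : A) : F * (F * y) = y := by rw [← mul_assoc, hF, one_mul]
  simp only [mul_sub, sub_mul, neg_sub, mul_assoc, hF', hF, mul_one]

theorem IsIdempotentElem.mul_commutator {P : A} (hP : IsIdempotentElem P) (F : A) :
    P * (F * P - P * F) = (F * P - P * F) * (1 - P) := by
  simp only [mul_sub, sub_mul, mul_one, mul_assoc, hP.mul_self_mul, hP.eq]
  abel

theorem IsIdempotentElem.mul_commutator_sq {F P : A} (hF : F * F = 1) (hP : IsIdempotentElem P) :
    P * ((F * P - P * F) * (F * P - P * F)) = P * F * P * F * P - P := by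
  have hF' (y : A) : F * (F * y) = y := by rw [← mul_assoc, hF, one_mul]
  simp only [mul_sub, sub_mul, mul_assoc, hP.mul_self_mul, hF', hP.eq]
  abel

theorem IsIdempotentElem.commutator_sq_mul {F P : A} (hF : F * F = 1) (hP : IsIdempotentElem P) :
    (F * P - P * F) * (F * P - P * F) * P = P * F * P * F * P - P := by
  have hF' (y : A) : F * (F * y) = y := by rw [← mul_assoc, hF, one_mul]
  simp only [mul_sub, sub_mul, mul_assoc, hP.mul_self_mul, hF', hP.eq]
  abel

theorem Commute.mul_self_of_mul_eq_neg {a b : A} (h : a * b = -(b * a)) : Commute a (b * b) := by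
  rw [Commute, SemiconjBy, ← mul_assoc, h, neg_mul, mul_assoc, h, mul_neg, neg_neg, mul_assoc]

theorem Commute.of_corner {a b P Y : A} (haY : Commute a Y) (haP : a * P = a) (hPa : P * a = a)
    (hbP : b * P = Y) (hPb : P * b = Y) : Commute a b :=
  calc a * b = a * (P * b) := by rw [← mul_assoc, haP]
    _ = b * P * a := by rw [hPb, haY.eq, hbP]
    _ = b * a := by rw [mul_assoc, hPa]

theorem conj_mul_conj_of_intertwines {s t X : A} (hs : IsIdempotentElem s)
    (ht : IsIdempotentElem t) (hsX : s * X = X * t) (htX : t * X = X * s) :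
    s * X * t * (t * X * s) = X * X * s := by
  calc s * X * t * (t * X * s) = X * t * (X * s) := by
        rw [hsX, ht.mul_mul_self, htX, hs.mul_mul_self]
    _ = X * X * s := by
        rw [mul_assoc X t, ← mul_assoc t, htX, hs.mul_mul_self, ← mul_assoc]

theorem Commute.mul_pow_succ_of_isIdempotentElem {q s : A} (hqs : Commute q s)
    (hs : IsIdempotentElem s) (n : ℕ) : (q * s) ^ (n + 1) = s * q ^ (n + 1) * s := by
  rw [hqs.mul_pow, hs.pow_succ_eq, ← (hqs.pow_left _).eq, mul_assoc, hs.eq]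

theorem IsIdempotentElem.corner_mul_self {P : A} (hP : IsIdempotentElem P) (F : A) :
    P * F * P * (P * F * P) = P * F * P * F * P := by
  simp only [mul_assoc, hP.mul_self_mul]

theorem commute_commutator_sq {F P : A} (hF : F * F = 1) (hP : IsIdempotentElem P) :
    Commute ((F * P - P * F) * (F * P - P * F)) P :=
  (hP.commutator_sq_mul hF).trans (hP.mul_commutator_sq hF).symm

theorem commute_commutator_sq_of_anticomm {F P S' : A} (hF : F * F = 1)
    (hP : IsIdempotentElem P) (hS'P : S' * P = S') (hPS' : P * S' = S')
    (hanti : S' * (P * F * P) = -(P * F * P * S')) :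
    Commute S' ((F * P - P * F) * (F * P - P * F)) := by
  refine ((Commute.mul_self_of_mul_eq_neg hanti).sub_right (hS'P.trans hPS'.symm)).of_corner
    hS'P hPS' ?_ ?_
  · rw [hP.corner_mul_self]; exact hP.commutator_sq_mul hF
  · rw [hP.corner_mul_self]; exact hP.mul_commutator_sq hF

end CommutatorIdentities

section GradedCorner

variable {R A : Type*} [Field R] [Ring A] [Algebra R A] {P S' : A}

theorem IsIdempotentElem.half_add_of_grading (hP : IsIdempotentElem P) (h2 : (2 : R) ≠ 0)
    (hS'2 : S' * S' = P) (hS'P : S' * P = S') (hPS' : P * S' = S') :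
    IsIdempotentElem ((2 : R)⁻¹ • (P + S')) := by
  have hsq : (P + S') * (P + S') = (2 : R) • (P + S') := by
    rw [mul_add, add_mul, add_mul, hP.eq, hS'P, hPS', hS'2, two_smul]
    abel
  rw [IsIdempotentElem, smul_mul_smul_comm, hsq, smul_smul, mul_assoc, inv_mul_cancel₀ h2,
    mul_one]

theorem half_add_mul_eq_mul_half_sub_of_anticomm {X : A} (hPX : P * X = X) (hXP : X * P = X)
    (hS'X : S' * X = -(X * S')) :
    (2 : R)⁻¹ • (P + S') * X = X * (2 : R)⁻¹ • (P - S') := by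
  rw [smul_mul_assoc, mul_smul_comm, add_mul, mul_sub, hPX, hXP, hS'X, sub_eq_add_neg]

theorem IsIdempotentElem.half_sub_of_grading (hP : IsIdempotentElem P) (h2 : (2 : R) ≠ 0)
    (hS'2 : S' * S' = P) (hS'P : S' * P = S') (hPS' : P * S' = S') :
    IsIdempotentElem ((2 : R)⁻¹ • (P - S')) := by
  rw [sub_eq_add_neg]
  exact hP.half_add_of_grading h2 (by rw [neg_mul_neg, hS'2]) (by rw [neg_mul, hS'P])
    (by rw [mul_neg, hPS'])

theorem half_sub_mul_eq_mul_half_add_of_anticomm {X : A} (hPX : P * X = X) (hXP : X * P = X)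
    (hS'X : S' * X = -(X * S')) :
    (2 : R)⁻¹ • (P - S') * X = X * (2 : R)⁻¹ • (P + S') := by
  have hS'X' : -S' * X = -(X * -S') := by rw [neg_mul, mul_neg, hS'X]
  simpa only [← sub_eq_add_neg, sub_neg_eq_add] using
    half_add_mul_eq_mul_half_sub_of_anticomm (R := R) hPX hXP hS'X'

theorem mul_half_add_of_grading (hP : IsIdempotentElem P) (hPS' : P * S' = S') :
    P * (2 : R)⁻¹ • (P + S') = (2 : R)⁻¹ • (P + S') := by
  rw [mul_smul_comm, mul_add, hP.eq, hPS']

theorem half_add_corner_mul_half_sub_corner (h2 : (2 : R) ≠ 0) (hP : IsIdempotentElem P)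
    (hS'2 : S' * S' = P) (hS'P : S' * P = S') (hPS' : P * S' = S') {X : A} (hPX : P * X = X)
    (hXP : X * P = X) (hS'X : S' * X = -(X * S')) :
    (2 : R)⁻¹ • (P + S') * X * ((2 : R)⁻¹ • (P - S')) *
        ((2 : R)⁻¹ • (P - S') * X * ((2 : R)⁻¹ • (P + S'))) = X * X * (2 : R)⁻¹ • (P + S') :=
  conj_mul_conj_of_intertwines (hP.half_add_of_grading h2 hS'2 hS'P hPS')
    (hP.half_sub_of_grading h2 hS'2 hS'P hPS')
    (half_add_mul_eq_mul_half_sub_of_anticomm hPX hXP hS'X)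
    (half_sub_mul_eq_mul_half_add_of_anticomm hPX hXP hS'X)

end GradedCorner

theorem graded_fedosov_corner_identities_general
    {A : Type*} [Ring A] [Algebra ℂ A]
    (F P S' : A)
    (hF2 : F * F = 1)
    (hPidem : P * P = P)
    (hS'2 : S' * S' = P)
    (hS'P : S' * P = S') (hPS' : P * S' = S')
    (hanti : S' * (P * F * P) = -((P * F * P) * S')) :
    F * (F * P - P * F) = -((F * P - P * F) * F) ∧
    P * (F * P - P * F) = (F * P - P * F) * (1 - P) ∧
    P * ((F * P - P * F) * (F * P - P * F)) = P * F * P * F * P - P ∧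
    ∀ m : ℕ,
      ((2 : ℂ)⁻¹ • (P + S') -
          (((2 : ℂ)⁻¹ • (P + S')) * (P * F * P) * ((2 : ℂ)⁻¹ • (P - S'))) *
            (((2 : ℂ)⁻¹ • (P - S')) * (P * F * P) * ((2 : ℂ)⁻¹ • (P + S')))) ^ (m + 1)
        = ((-1 : ℂ) ^ (m + 1)) •
            (((2 : ℂ)⁻¹ • (P + S')) * (F * P - P * F) ^ (2 * m + 2) *
              ((2 : ℂ)⁻¹ • (P + S'))) := by
  refine ⟨mul_commutator_of_mul_self_eq_one hF2 P, IsIdempotentElem.mul_commutator hPidem F,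
    IsIdempotentElem.mul_commutator_sq hF2 hPidem, fun m => ?_⟩
  have hP : IsIdempotentElem P := hPidem
  set Q := (F * P - P * F) * (F * P - P * F)
  set s := (2 : ℂ)⁻¹ • (P + S')
  have hQs : Commute Q s :=
    ((commute_commutator_sq hF2 hP).add_right
      (commute_commutator_sq_of_anticomm hF2 hP hS'P hPS' hanti).symm).smul_right _
  have hs : IsIdempotentElem s := hP.half_add_of_grading two_ne_zero hS'2 hS'P hPS'
  have hPs : P * s = s := mul_half_add_of_grading hP hPS'
  have hcorner : s - P * F * P * (P * F * P) * s = -(Q * s) :=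
    calc s - P * F * P * (P * F * P) * s = -((P * F * P * F * P - P) * s) := by
          rw [hP.corner_mul_self, sub_mul, hPs, neg_sub]
      _ = -(Q * s) := by rw [← hP.commutator_sq_mul hF2, mul_assoc, hPs]
  rw [half_add_corner_mul_half_sub_corner two_ne_zero hP hS'2 hS'P hPS'
      (by rw [← mul_assoc, ← mul_assoc, hP.eq]) (hP.mul_mul_self _) hanti,
    hcorner, ← neg_one_smul ℂ (Q * s), smul_pow, hQs.mul_pow_succ_of_isIdempotentElem hs,
    show 2 * m + 2 = 2 * (m + 1) by ring, pow_mul, sq]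

/-- Let `F` be a self-adjoint operator with `F² = 1`, `P` a projection, and `S'` a
self-adjoint unitary of the corner `P·P` (i.e. `S'² = P`, `S'P = PS' = S'`) anticommuting
with `F' = PFP`.  With `S_± = ½(P ± S')` and `F'_{±∓} = S_± F' S_∓`, the following exact
identities hold (commutators are `[x,y] = xy − yx`):
(a) `F[F,P] = −[F,P]F`;  (b) `P[F,P] = [F,P](1−P)`;  (c) `P[F,P]² = PFPFP − P`;  and for
every `m ≥ 0`, `(S₊ − F'₊₋F'₋₊)^{m+1} = (−1)^{m+1} S₊ [F,P]^{2m+2} S₊`. -/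
theorem graded_fedosov_corner_identities
    {A : Type*} [Ring A] [StarRing A] [Algebra ℂ A] [StarModule ℂ A]
    (F P S' : A)
    (hFsa : star F = F) (hF2 : F * F = 1)
    (hPidem : P * P = P) (hPsa : star P = P)
    (hS'sa : star S' = S') (hS'2 : S' * S' = P)
    (hS'P : S' * P = S') (hPS' : P * S' = S')
    (hanti : S' * (P * F * P) = -((P * F * P) * S')) :
    F * (F * P - P * F) = -((F * P - P * F) * F) ∧
    P * (F * P - P * F) = (F * P - P * F) * (1 - P) ∧
    P * ((F * P - P * F) * (F * P - P * F)) = P * F * P * F * P - P ∧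
    ∀ m : ℕ,
      ((2 : ℂ)⁻¹ • (P + S') -
          (((2 : ℂ)⁻¹ • (P + S')) * (P * F * P) * ((2 : ℂ)⁻¹ • (P - S'))) *
            (((2 : ℂ)⁻¹ • (P - S')) * (P * F * P) * ((2 : ℂ)⁻¹ • (P + S')))) ^ (m + 1)
        = ((-1 : ℂ) ^ (m + 1)) •
            (((2 : ℂ)⁻¹ • (P + S')) * (F * P - P * F) ^ (2 * m + 2) *
              ((2 : ℂ)⁻¹ • (P + S'))) :=
  graded_fedosov_corner_identities_general F P S' hF2 hPidem hS'2 hS'P hPS' hanti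
end

section
/- Generalized Calderón–Fedosov formula: let B be an ungraded unital C*-algebra with a continuous normalized trace, and T ∈ B(H_B) with ‖T‖ ≤ 1 admitting a polar decomposition T = W|T| with W a partial isometry satisfying W*W|T| = |T|W*W = |T|. If (1 − T*T)^n and (1 − TT*)^n lie in S₁(H_B) (trace class for the induced trace Tr), then Tr((1 − T*T)^n) − Tr((1 − TT*)^n) = Tr(1 − W*W) − Tr(1 − WW*). -/
/-!
Put `Q = W*W`, `P = WW*` and `X = T*T = R²`. The hypotheses say that `X` lies in the corner
`QAQ` and that `TT* = WXW*`. Both `1 - X = (1 - Q) + (Q - X)` and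
`1 - TT* = (1 - P) + W(Q - X)W*` are sums of an idempotent and an element orthogonal to it, so
taking `n`-th powers only affects the second summand; as conjugation by `W` is multiplicative on
the corner, `(1 - TT*)ⁿ = 1 - P + W(1 - X)ⁿW*`. Moving `W` around under the trace then gives
`Tr(W(1 - X)ⁿW*) = Tr((1 - X)ⁿQ) = Tr((1 - X)ⁿ) - Tr(1 - Q)`.
-/

section Monoid

variable {M : Type*} [Monoid M]

theorem pow_mul_eq_of_mul_eq {b c : M} (h : b * c = c) (n : ℕ) : b ^ n * c = c := by
  induction n with
  | zero => rw [pow_zero, one_mul]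
  | succ n ih => rw [pow_succ', mul_assoc, ih, h]

theorem mul_mul_mul_pow_succ {u v a : M} (h : v * u * a = a) (n : ℕ) :
    (u * a * v) ^ (n + 1) = u * a ^ (n + 1) * v := by
  induction n with
  | zero => rw [zero_add, pow_one, pow_one]
  | succ n ih =>
    calc (u * a * v) ^ (n + 1 + 1) = u * a ^ (n + 1) * (v * u * a) * v := by
          rw [pow_succ, ih]; simp only [mul_assoc]
      _ = u * a ^ (n + 1 + 1) * v := by rw [h, pow_succ a (n + 1), mul_assoc u]

end Monoid

section Ring

variable {R : Type*} [Ring R]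

theorem IsIdempotentElem.add_pow_of_mul_eq_zero {e a : R} (he : IsIdempotentElem e)
    (hea : e * a = 0) (hae : a * e = 0) {n : ℕ} (hn : n ≠ 0) : (e + a) ^ n = e + a ^ n := by
  obtain ⟨n, rfl⟩ := Nat.exists_eq_add_one_of_ne_zero hn
  induction n with
  | zero => rw [zero_add, pow_one, pow_one]
  | succ n ih =>
    have hae' : a ^ (n + 1) * e = 0 := by rw [pow_succ, mul_assoc, hae, mul_zero]
    rw [pow_succ, ih n.succ_ne_zero, add_mul, mul_add, mul_add, he.eq, hea, hae', add_zero,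
      zero_add, ← pow_succ]

theorem IsIdempotentElem.one_sub_pow_of_mul_eq {q x : R} (hq : IsIdempotentElem q)
    (hqx : q * x = x) (hxq : x * q = x) {n : ℕ} (hn : n ≠ 0) :
    (1 - x) ^ n = (1 - q) + (q - x) ^ n := by
  have h₁ : (1 - q) * (q - x) = 0 := by rw [mul_sub, hq.one_sub_mul_self, sub_mul, one_mul, hqx,
    sub_self, zero_sub, neg_zero]
  have h₂ : (q - x) * (1 - q) = 0 := by rw [sub_mul, hq.mul_one_sub_self, mul_sub, mul_one, hxq,
    sub_self, zero_sub, neg_zero]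
  rw [← hq.one_sub.add_pow_of_mul_eq_zero h₁ h₂ hn, sub_add_sub_cancel]

theorem one_sub_pow_mul_of_mul_eq {q x : R} (hxq : x * q = x) (n : ℕ) :
    (1 - x) ^ n * q = (1 - x) ^ n - (1 - q) := by
  have h : (1 - x) * (1 - q) = 1 - q := by
    rw [sub_mul, one_mul, mul_sub, mul_one, hxq, sub_self, sub_zero]
  calc (1 - x) ^ n * q = (1 - x) ^ n - (1 - x) ^ n * (1 - q) := by
        rw [mul_sub, mul_one, sub_sub_cancel]
    _ = (1 - x) ^ n - (1 - q) := by rw [pow_mul_eq_of_mul_eq h]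

end Ring

section PartialIsometry

variable {A : Type*} [Ring A] [StarRing A] {W : A}

theorem isIdempotentElem_star_mul_self (hW : W * star W * W = W) :
    IsIdempotentElem (star W * W) := by
  rw [IsIdempotentElem, ← mul_assoc, mul_assoc (star W) W, mul_assoc (star W), hW]

theorem isIdempotentElem_mul_star_self (hW : W * star W * W = W) :
    IsIdempotentElem (W * star W) := by
  rw [IsIdempotentElem, ← mul_assoc, hW]

theorem star_mul_self_mul_star (hW : W * star W * W = W) : star W * W * star W = star W := by
  simpa only [star_mul, star_star, mul_assoc] using congrArg star hW

theorem one_sub_mul_mul_star_pow (hW : W * star W * W = W) {X : A}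
    (hQX : star W * W * X = X) (hXQ : X * (star W * W) = X) {n : ℕ} (hn : n ≠ 0) :
    (1 - W * X * star W) ^ n = 1 - W * star W + W * (1 - X) ^ n * star W := by
  obtain ⟨m, rfl⟩ := Nat.exists_eq_succ_of_ne_zero hn
  have hQ := isIdempotentElem_star_mul_self hW
  have hsplit : 1 - W * X * star W = (1 - W * star W) + W * (star W * W - X) * star W := by
    rw [mul_sub, sub_mul, ← mul_assoc, hW, sub_add_sub_cancel]
  have h₁ : (1 - W * star W) * (W * (star W * W - X) * star W) = 0 := by
    rw [← mul_assoc, ← mul_assoc, sub_mul, one_mul, hW, sub_self, zero_mul, zero_mul]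
  have h₂ : W * (star W * W - X) * star W * (1 - W * star W) = 0 := by
    rw [mul_sub, mul_one, mul_assoc _ (star W), ← mul_assoc (star W), star_mul_self_mul_star hW,
      sub_self]
  have hcorner : star W * W * (star W * W - X) = star W * W - X := by rw [mul_sub, hQ.eq, hQX]
  have hW_compl : W * (1 - star W * W) = 0 := by rw [mul_sub, mul_one, ← mul_assoc, hW, sub_self]
  rw [hsplit, (isIdempotentElem_mul_star_self hW).one_sub.add_pow_of_mul_eq_zero h₁ h₂ hn,
    mul_mul_mul_pow_succ hcorner, hQ.one_sub_pow_of_mul_eq hQX hXQ hn, mul_add, hW_compl,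
    zero_add]

end PartialIsometry

theorem generalized_calderon_fedosov_general
    {A : Type*} [NormedRing A] [StarRing A]
    [NormedAlgebra ℂ A]
    (S1 : TwoSidedIdeal A) (Tr : A →ₗ[ℂ] ℂ)
    (htr : ∀ s t : A, s ∈ S1 → Tr (s * t) = Tr (t * s))
    (T W R : A)
    (hTWR : T = W * R) (hRsa : star R = R) (hR2 : R * R = star T * T)
    (hWpi : W * star W * W = W)
    (hWR : star W * W * R = R) (hRW : R * (star W * W) = R)
    (n : ℕ) (hn : 1 ≤ n)
    (h1 : (1 - star T * T) ^ n ∈ S1) :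
    Tr ((1 - star T * T) ^ n) - Tr ((1 - T * star T) ^ n)
      = Tr (1 - star W * W) - Tr (1 - W * star W) := by
  have hQX : star W * W * (star T * T) = star T * T := by rw [← hR2, ← mul_assoc, hWR]
  have hXQ : star T * T * (star W * W) = star T * T := by rw [← hR2, mul_assoc, hRW]
  have hTT : T * star T = W * (star T * T) * star W := by
    rw [← hR2, hTWR, star_mul, hRsa]; simp only [mul_assoc]
  have hconj : Tr (W * (1 - star T * T) ^ n * star W)
      = Tr ((1 - star T * T) ^ n) - Tr (1 - star W * W) := by
    rw [mul_assoc, ← htr _ _ (S1.mul_mem_right _ _ h1), mul_assoc,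
      one_sub_pow_mul_of_mul_eq hXQ, map_sub]
  rw [hTT, one_sub_mul_mul_star_pow hWpi hQX hXQ (by omega), map_add, hconj]
  ring

/-- Generalized Calderón–Fedosov formula.  Let `A = B(H_B)` be the adjointable operators on
the standard Hilbert module over a unital C*-algebra with trace (here modelled as an
arbitrary unital C*-algebra `A`), `S₁` the trace ideal of the induced trace `τ = Tr`, which
is tracial whenever one of the factors lies in `S₁`.  Let `T ∈ A` with `‖T‖ ≤ 1` admit a
polar decomposition `T = W|T|`, `W` a partial isometry with `W*W|T| = |T|W*W = |T|`.  If
`(1 − T*T)ⁿ` and `(1 − TT*)ⁿ` lie in `S₁`, then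
`Tr((1 − T*T)ⁿ) − Tr((1 − TT*)ⁿ) = Tr(1 − W*W) − Tr(1 − WW*)`. -/
theorem generalized_calderon_fedosov
    {A : Type*} [NormedRing A] [StarRing A] [CStarRing A]
    [NormedAlgebra ℂ A] [CompleteSpace A]
    (S1 : TwoSidedIdeal A) (Tr : A →ₗ[ℂ] ℂ)
    (htr : ∀ s t : A, s ∈ S1 → Tr (s * t) = Tr (t * s))
    (T W R : A) (hTnorm : ‖T‖ ≤ 1)
    (hTWR : T = W * R) (hRsa : star R = R) (hR2 : R * R = star T * T)
    (hWpi : W * star W * W = W)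
    (hWR : star W * W * R = R) (hRW : R * (star W * W) = R)
    (n : ℕ) (hn : 1 ≤ n)
    (h1 : (1 - star T * T) ^ n ∈ S1) (h2 : (1 - T * star T) ^ n ∈ S1) :
    Tr ((1 - star T * T) ^ n) - Tr ((1 - T * star T) ^ n)
      = Tr (1 - star W * W) - Tr (1 - W * star W) :=
  generalized_calderon_fedosov_general S1 Tr htr T W R hTWR hRsa hR2 hWpi hWR hRW n hn h1
end
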